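/- arXiv:1208.0269 — 4 statements merged into one kernel-verified Lean document; each statement's English description precedes it below -/
import Mathlib

section
/- Let R be a regular local ring and a, b, c, d ∈ R such that a, c, d form a regular sequence and d ∈ (a, b). Then (a, b) ∩ (c, d) = (ac, bc, d). -/
/-- If `c` acts injectively on `R ⧸ I`, then `c * t ∈ I` implies `t ∈ I`. -/
lemma aux_reg_mem {R : Type} [CommRing R] {I : Ideal R} {c : R}
    (h : IsSMulRegular (R ⧸ (I • ⊤ : Submodule R R)) c) {t : R} (ht : c * t ∈ I) :
    t ∈ I := by
  have hIt : (I • ⊤ : Submodule R R) = I := by rw [smul_eq_mul, Ideal.mul_top]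
  have h0 : c • (Submodule.Quotient.mk t : R ⧸ (I • ⊤ : Submodule R R)) = c • 0 := by
    rw [smul_zero, ← Submodule.Quotient.mk_smul, Submodule.Quotient.mk_eq_zero, hIt]
    simpa [smul_eq_mul] using ht
  have := h h0
  rwa [Submodule.Quotient.mk_eq_zero, hIt] at this

/-- Let `R` be a (Noetherian) regular local ring and `a, b, c, d ∈ R` such that
`a, c, d` form a regular sequence and `d ∈ (a, b)`.  Then `(a,b) ∩ (c,d) = (ac, bc, d)`.
Here regularity of the local ring is expressed by the maximal ideal being generated by a
regular sequence. -/
theorem stmt0 (R : Type) [CommRing R] [IsNoetherianRing R] [IsLocalRing R]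
    (hreg : ∃ rs : List R, RingTheory.Sequence.IsRegular R rs ∧
      Ideal.ofList rs = IsLocalRing.maximalIdeal R)
    (a b c d : R) (hacd : RingTheory.Sequence.IsRegular R [a, c, d])
    (hd : d ∈ Ideal.span {a, b}) :
    Ideal.span {a, b} ⊓ Ideal.span {c, d} = Ideal.span {a * c, b * c, d} := by
  have e1 : Ideal.ofList ([a, c, d].take 1) = Ideal.span {a} := by
    show Ideal.span _ = _
    rw [show ({r | r ∈ [a, c, d].take 1} : Set R) = {a} by ext r; simp]
  have e2 : Ideal.ofList ([a, c, d].take 2) = Ideal.span {a, c} := by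
    show Ideal.span _ = _
    rw [show ({r | r ∈ [a, c, d].take 2} : Set R) = {a, c} by ext r; simp]
  have h1 : IsSMulRegular (R ⧸ (Ideal.span {a} • ⊤ : Submodule R R)) c := by
    have := hacd.toIsWeaklyRegular.regular_mod_prev 1 (by norm_num)
    rwa [e1] at this
  have h2 : IsSMulRegular (R ⧸ (Ideal.span {a, c} • ⊤ : Submodule R R)) d := by
    have := hacd.toIsWeaklyRegular.regular_mod_prev 2 (by norm_num)
    rwa [e2] at this
  have hc : ∀ t : R, c * t ∈ Ideal.span {a} → t ∈ Ideal.span {a} :=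
    fun t ht => aux_reg_mem h1 ht
  have hd2 : ∀ t : R, d * t ∈ Ideal.span ({a, c} : Set R) → t ∈ Ideal.span ({a, c} : Set R) :=
    fun t ht => aux_reg_mem h2 ht
  obtain ⟨α, β, hαβ⟩ := Ideal.mem_span_pair.mp hd
  -- key: if u * c ∈ (a, b) then u ∈ (a, b)
  have hkey : ∀ u : R, u * c ∈ Ideal.span ({a, b} : Set R) → u ∈ Ideal.span ({a, b} : Set R) := by
    intro u hu
    obtain ⟨P, Q, hPQ⟩ := Ideal.mem_span_pair.mp hu
    have hQd : d * Q ∈ Ideal.span ({a, c} : Set R) := by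
      refine Ideal.mem_span_pair.mpr ⟨Q * α - β * P, β * u, ?_⟩
      linear_combination Q * hαβ - β * hPQ
    obtain ⟨s, t, hst⟩ := Ideal.mem_span_pair.mp (hd2 Q hQd)
    have hct : c * (u - t * b) ∈ Ideal.span ({a} : Set R) := by
      rw [Ideal.mem_span_singleton]
      exact ⟨P + s * b, by linear_combination -hPQ - b * hst⟩
    have hub : u - t * b ∈ Ideal.span ({a, b} : Set R) := by
      have := hc _ hct
      rw [Ideal.mem_span_singleton] at this
      obtain ⟨k, hk⟩ := this
      exact Ideal.mem_span_pair.mpr ⟨k, 0, by linear_combination -hk⟩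
    have : u = (u - t * b) + t * b := by ring
    rw [this]
    exact add_mem hub (Ideal.mul_mem_left _ _ (Ideal.subset_span (by simp)))
  apply le_antisymm
  · rintro x ⟨hx1, hx2⟩
    obtain ⟨u, v, huv⟩ := Ideal.mem_span_pair.mp hx2
    have hucab : u * c ∈ Ideal.span ({a, b} : Set R) := by
      have hvd : v * d ∈ Ideal.span ({a, b} : Set R) := Ideal.mul_mem_left _ _ hd
      have : u * c = x - v * d := by linear_combination huv
      rw [this]
      exact sub_mem hx1 hvd
    obtain ⟨p, q, hpq⟩ := Ideal.mem_span_pair.mp (hkey u hucab)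
    have hx : x = p * (a * c) + q * (b * c) + v * d := by
      linear_combination -huv - c * hpq
    rw [hx]
    refine add_mem (add_mem ?_ ?_) ?_ <;>
      exact Ideal.mul_mem_left _ _ (Ideal.subset_span (by simp))
  · rw [Ideal.span_le]
    rintro x hx
    simp only [Set.mem_insert_iff, Set.mem_singleton_iff] at hx
    rcases hx with rfl | rfl | rfl
    · exact ⟨Ideal.mul_mem_right _ _ (Ideal.subset_span (by simp)),
        Ideal.mul_mem_left _ _ (Ideal.subset_span (by simp))⟩
    · exact ⟨Ideal.mul_mem_right _ _ (Ideal.subset_span (by simp)),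
        Ideal.mul_mem_left _ _ (Ideal.subset_span (by simp))⟩
    · exact ⟨hd, Ideal.subset_span (by simp)⟩
end

section
/- Let R be a regular local ring with regular system of parameters x, y, z, and let m ≤ n be positive integers. Then (x, z^m) ∩ (y, z^n) = (xy, y z^m, z^n). -/
/-! Regular sequences in a Noetherian local ring may be permuted, so `z` is regular modulo `(x)`
and `y` is regular modulo `(x, z)`; from these `y` is regular modulo `(x, z ^ m)`. If
`f = r * y + s * z ^ n` lies in `(x, z ^ m)`, then so does `r * y`, because `z ^ m ∣ z ^ n`; hence
`r ∈ (x, z ^ m)`, which puts `f` in `(x * y, y * z ^ m, z ^ n)`. -/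

open RingTheory.Sequence

theorem RingTheory.Sequence.IsWeaklyRegular.isSMulRegular_quotient_ofList_take {R : Type*}
    [CommRing R] {rs : List R} (h : IsWeaklyRegular R rs) (i : ℕ) (hi : i < rs.length) :
    IsSMulRegular (R ⧸ Ideal.ofList (rs.take i)) rs[i] := by
  have := h.regular_mod_prev i hi
  rwa [Ideal.smul_eq_mul, Ideal.mul_top] at this

namespace Ideal

variable {R : Type*} [CommRing R]

theorem isSMulRegular_quotient_sup_span_pow {I : Ideal R} {y z : R}
    (hz : IsSMulRegular (R ⧸ I) z) (hy : IsSMulRegular (R ⧸ (I ⊔ span {z})) y) (k : ℕ) :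
    IsSMulRegular (R ⧸ (I ⊔ span {z ^ k})) y := by
  simp only [isSMulRegular_quotient_iff_mem_of_smul_mem, smul_eq_mul] at hz hy ⊢
  induction k with
  | zero => simp
  | succ k ih =>
    intro c hc
    have hcz : c ∈ I ⊔ span {z} := hy c <|
      sup_le_sup_left (span_singleton_le_span_singleton.mpr (dvd_pow_self z k.succ_ne_zero)) _ hc
    obtain ⟨i, hi, _, hw, rfl⟩ := Submodule.mem_sup.mp hcz
    obtain ⟨c', rfl⟩ := mem_span_singleton'.mp hw
    obtain ⟨j, hj, _, hv, hjv⟩ := Submodule.mem_sup.mp hc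
    obtain ⟨t, rfl⟩ := mem_span_singleton'.mp hv
    have hc'y : y * c' - t * z ^ k ∈ I := hz _ <| by
      have : z * (y * c' - t * z ^ k) = j - y * i := by linear_combination -hjv
      exact this ▸ sub_mem hj (mul_mem_left _ _ hi)
    have hc' : c' ∈ I ⊔ span {z ^ k} := ih c' <| by
      have : y * c' = (y * c' - t * z ^ k) + t * z ^ k := by ring
      exact this ▸ Submodule.add_mem_sup hc'y (mul_mem_left _ _ (mem_span_singleton_self _))
    obtain ⟨i', hi', _, hs, rfl⟩ := Submodule.mem_sup.mp hc'
    obtain ⟨s, rfl⟩ := mem_span_singleton'.mp hs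
    have : i + (i' + s * z ^ k) * z = (i + i' * z) + s * z ^ (k + 1) := by ring
    exact this ▸ Submodule.add_mem_sup (add_mem hi (mul_mem_right _ _ hi'))
      (mul_mem_left _ _ (mem_span_singleton_self _))

theorem span_pair_inf_span_pair_of_dvd {a b c d : R} (hbd : b ∣ d)
    (hc : IsSMulRegular (R ⧸ span {a, b}) c) :
    span {a, b} ⊓ span {c, d} = span {a * c, b * c, d} := by
  have hd : d ∈ span {a, b} := mem_span_pair.mpr <| by
    obtain ⟨e, rfl⟩ := hbd
    exact ⟨0, e, by ring⟩
  apply le_antisymm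
  · rintro f ⟨hfab, hfcd⟩
    obtain ⟨r, s, rfl⟩ := mem_span_pair.mp hfcd
    have hr : r ∈ span {a, b} := mem_of_isSMulRegular_quotient_of_smul_mem (r := c) hc <| by
      have : c • r = (r * c + s * d) - s * d := by rw [smul_eq_mul]; ring
      exact this ▸ sub_mem hfab (mul_mem_left _ _ hd)
    obtain ⟨e, g, rfl⟩ := mem_span_pair.mp hr
    exact Submodule.mem_span_triple.mpr ⟨e, g, s, by simp only [smul_eq_mul]; ring⟩
  · rw [span_le]
    rintro w (rfl | rfl | rfl)
    all_goals try exact ⟨mul_mem_right _ _ (subset_span (by simp)),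
      mul_mem_left _ _ (subset_span (by simp))⟩
    exact ⟨hd, subset_span (by simp)⟩

end Ideal

theorem stmt11_general (R : Type) [CommRing R] [IsNoetherianRing R] [IsLocalRing R]
    (x y z : R) (hreg : RingTheory.Sequence.IsRegular R [x, y, z])
    (m n : ℕ) (hmn : m ≤ n) :
    Ideal.span {x, z ^ m} ⊓ Ideal.span {y, z ^ n} =
      Ideal.span {x * y, y * z ^ m, z ^ n} := by
  have hxzy : IsRegular R [x, z, y] := IsLocalRing.isRegular_of_perm hreg (.cons x (.swap z y []))
  have hz : IsSMulRegular (R ⧸ Ideal.ofList [x]) z :=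
    hxzy.toIsWeaklyRegular.isSMulRegular_quotient_ofList_take 1 (by simp)
  have hy : IsSMulRegular (R ⧸ Ideal.ofList [x, z]) y :=
    hxzy.toIsWeaklyRegular.isSMulRegular_quotient_ofList_take 2 (by simp)
  rw [Ideal.ofList_singleton] at hz
  rw [Ideal.ofList_cons, Ideal.ofList_singleton] at hy
  have hym := Ideal.isSMulRegular_quotient_sup_span_pow hz hy m
  rw [← Ideal.span_insert] at hym
  rw [Ideal.span_pair_inf_span_pair_of_dvd (pow_dvd_pow z hmn) hym, mul_comm (z ^ m)]

/-- let `R` be a regular local ring with regular system of parameters `x, y, z`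
and let `m ≤ n` be positive integers.  Then `(x, z^m) ∩ (y, z^n) = (xy, y z^m, z^n)`. -/
theorem stmt11 (R : Type) [CommRing R] [IsNoetherianRing R] [IsLocalRing R]
    (x y z : R) (hreg : RingTheory.Sequence.IsRegular R [x, y, z])
    (hmax : Ideal.span {x, y, z} = IsLocalRing.maximalIdeal R)
    (m n : ℕ) (hm : 0 < m) (hmn : m ≤ n) :
    Ideal.span {x, z ^ m} ⊓ Ideal.span {y, z ^ n} =
      Ideal.span {x * y, y * z ^ m, z ^ n} :=
  stmt11_general R x y z hreg m n hmn
end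

section
/- Let R be a regular local ring with regular system of parameters x, y, z, and let q, m, n be positive integers with q < m < qn. Then (x − z^q, z^m) ∩ (y, x^n) = (y(x − z^q), y z^m, x^n). -/
/-!
Put `I = (x - z^q, z^m)`. Since `x^n ≡ z^{qn} ≡ 0 (mod I)`, the generator `x^n` of `(y, x^n)` lies
in `I`, so `I ∩ (y, x^n) = yI + (x^n)` as soon as `y` is a nonzerodivisor modulo `I`. This holds
because `x - z^q, z^m, y` is again a regular sequence: it is obtained from the regular sequence
`z, x, y` by replacing `x` with `x - z^q` (which acts as `x` modulo `z`), permuting (allowed in a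
Noetherian local ring) and raising `z` to the `m`-th power.
-/

open RingTheory.Sequence Pointwise

section

variable {R M : Type*} [CommRing R] [AddCommGroup M] [Module R M]

theorem IsSMulRegular.quotSMulTop_pow {a b : R} (ha : IsSMulRegular M a)
    (hb : IsSMulRegular (QuotSMulTop a M) b) (k : ℕ) :
    IsSMulRegular (QuotSMulTop (a ^ k) M) b := by
  rw [isSMulRegular_quotient_iff_mem_of_smul_mem] at hb ⊢
  simp only [Submodule.mem_smul_pointwise_iff_exists, Submodule.mem_top, true_and] at hb ⊢
  induction k with
  | zero => simp
  | succ k ih =>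
    intro m ⟨w, hw⟩
    obtain ⟨m', rfl⟩ := ih m ⟨a • w, by rw [← hw, pow_succ, mul_smul]⟩
    have hbm' : b • m' = a • w := (ha.pow k) <| show a ^ k • b • m' = a ^ k • a • w by
      rw [smul_comm, ← hw, pow_succ, mul_smul]
    obtain ⟨m'', rfl⟩ := hb m' ⟨w, hbm'.symm⟩
    exact ⟨m'', by rw [pow_succ, mul_smul]⟩

namespace RingTheory.Sequence

theorem IsWeaklyRegular.cons_sub_of_dvd {a b d : R} {rs : List R}
    (h : IsWeaklyRegular M (a :: b :: rs)) (hd : a ∣ d) :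
    IsWeaklyRegular M (a :: (b - d) :: rs) := by
  rw [isWeaklyRegular_cons_iff] at h ⊢
  refine ⟨h.1, (AddEquiv.isWeaklyRegular_congr (e := AddEquiv.refl _) ?_).mp h.2⟩
  have hd0 : ∀ w : QuotSMulTop a M, d • w = 0 :=
    Module.mem_annihilator.mp <| Ideal.mem_of_dvd _ hd (QuotSMulTop.mem_annihilator M a)
  exact .cons (fun w => by simp [sub_smul, hd0]) (List.forall₂_same.mpr fun _ _ _ => rfl)

theorem IsWeaklyRegular.pow_pair {a b : R} (h : IsWeaklyRegular M [a, b]) (k : ℕ) :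
    IsWeaklyRegular M [a ^ k, b] := by
  simp only [isWeaklyRegular_cons_iff, IsWeaklyRegular.nil, and_true] at h ⊢
  exact ⟨h.1.pow k, h.1.quotSMulTop_pow h.2 k⟩

theorem IsWeaklyRegular.isSMulRegular_quotient_span_pair {a b c : R}
    (h : IsWeaklyRegular R [a, b, c]) : IsSMulRegular (R ⧸ Ideal.span {a, b}) c := by
  have := ((isWeaklyRegular_append_iff R [a, b] [c]).mp h).2
  rwa [isWeaklyRegular_singleton_iff, smul_eq_mul, Ideal.mul_top, Ideal.ofList_cons,
    Ideal.ofList_singleton, ← Ideal.span_insert] at this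

end RingTheory.Sequence

theorem Ideal.inf_span_pair_eq_of_isSMulRegular {I : Ideal R} {y w : R}
    (hy : IsSMulRegular (R ⧸ I) y) (hw : w ∈ I) :
    I ⊓ span {y, w} = span {y} * I ⊔ span {w} := by
  refine le_antisymm ?_ (sup_le (le_inf mul_le_right ?_)
    (le_inf ((span_singleton_le_iff_mem I).mpr hw) (span_mono (by simp))))
  · rintro f ⟨hfI, hfJ⟩
    obtain ⟨a, b, rfl⟩ := mem_span_pair.mp hfJ
    have ha : a ∈ I := (isSMulRegular_quotient_iff_mem_of_smul_mem I y).mp hy a <| by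
      simpa [smul_eq_mul, mul_comm] using I.sub_mem hfI (I.mul_mem_left b hw)
    exact add_mem (mem_sup_left (mul_comm y a ▸ mul_mem_mul (mem_span_singleton_self y) ha))
      (mem_sup_right (mul_mem_left _ _ (mem_span_singleton_self w)))
  · exact mul_le_left.trans (span_mono (by simp))

theorem pow_mem_span_sub_pow_pow (a b : R) {q m n : ℕ} (h : m ≤ q * n) :
    a ^ n ∈ Ideal.span {a - b ^ q, b ^ m} := by
  obtain ⟨g, hg⟩ := sub_dvd_pow_sub_pow a (b ^ q) n
  have hb : (b ^ q) ^ n = b ^ m * b ^ (q * n - m) := by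
    rw [← pow_add, Nat.add_sub_cancel' h, ← pow_mul]
  exact Ideal.mem_span_pair.mpr ⟨g, b ^ (q * n - m), by linear_combination -hg - hb⟩

end

theorem stmt12_general (R : Type) [CommRing R] [IsNoetherianRing R] [IsLocalRing R]
    (x y z : R) (hreg : RingTheory.Sequence.IsRegular R [x, y, z])
    (hmax : Ideal.span {x, y, z} = IsLocalRing.maximalIdeal R)
    (q m n : ℕ) (hq : 0 < q) (hmqn : m < q * n) :
    Ideal.span {x - z ^ q, z ^ m} ⊓ Ideal.span {y, x ^ n} =
      Ideal.span {y * (x - z ^ q), y * z ^ m, x ^ n} := by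
  have hmem : ∀ r ∈ [x, y, z], r ∈ IsLocalRing.maximalIdeal R := fun r hr =>
    hmax ▸ Ideal.subset_span (by simpa using hr)
  have hmem' : ∀ r ∈ [z, x - z ^ q, y], r ∈ IsLocalRing.maximalIdeal R := by
    simp only [List.mem_cons, List.not_mem_nil, or_false, forall_eq_or_imp, forall_eq] at hmem ⊢
    exact ⟨hmem.2.2, sub_mem hmem.1 (Ideal.pow_mem_of_mem _ hmem.2.2 q hq), hmem.2.1⟩
  have hzxy : IsWeaklyRegular R [z, x - z ^ q, y] :=
    (IsLocalRing.isWeaklyRegular_of_perm_of_subset_maximalIdeal hreg.toIsWeaklyRegular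
      (List.perm_append_comm (l₁ := [x, y]) (l₂ := [z])) hmem).cons_sub_of_dvd
      (dvd_pow_self z hq.ne')
  have hxzy : IsWeaklyRegular R [x - z ^ q, z, y] :=
    IsLocalRing.isWeaklyRegular_of_perm_of_subset_maximalIdeal hzxy (.swap _ _ _) hmem'
  have hy : IsSMulRegular (R ⧸ Ideal.span {x - z ^ q, z ^ m}) y := by
    rw [isWeaklyRegular_cons_iff] at hxzy
    exact (IsWeaklyRegular.cons hxzy.1 (hxzy.2.pow_pair m)).isSMulRegular_quotient_span_pair
  rw [Ideal.inf_span_pair_eq_of_isSMulRegular hy (pow_mem_span_sub_pow_pow x z hmqn.le)]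
  simp only [Ideal.span_insert, Ideal.mul_sup, Ideal.span_singleton_mul_span_singleton, sup_assoc]

/-- let `R` be a regular local ring with regular system of parameters `x, y, z`
and let `q, m, n` be positive integers with `q < m < qn`.  Then
`(x - z^q, z^m) ∩ (y, x^n) = (y(x - z^q), y z^m, x^n)`. -/
theorem stmt12 (R : Type) [CommRing R] [IsNoetherianRing R] [IsLocalRing R]
    (x y z : R) (hreg : RingTheory.Sequence.IsRegular R [x, y, z])
    (hmax : Ideal.span {x, y, z} = IsLocalRing.maximalIdeal R)
    (q m n : ℕ) (hq : 0 < q) (hn : 0 < n) (hqm : q < m) (hmqn : m < q * n) :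
    Ideal.span {x - z ^ q, z ^ m} ⊓ Ideal.span {y, x ^ n} =
      Ideal.span {y * (x - z ^ q), y * z ^ m, x ^ n} :=
  stmt12_general R x y z hreg hmax q m n hq hmqn
end

section
/- Let R = k[[x,y,z]] and F = a x² + b x y² + f x y − (z^q x − y^{m−2}) with a, b units, m ≥ 4, and f ∈ (z). Then in S = R/(F) the ideal (x, y^{m−2})S is principal (generated by the image of x), while for 0 < d < m−2 the ideal (x, y^d)S is not principal, i.e. requires two generators: dim_k (x,y^d)/((x,y,z)(x,y^d) + (F)) = 2. -/
/-!
Write `F = x G + y^(m-2)` with `G = a x + b y² + f y - z^q`; since `q > 0`, `G` lies in the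
maximal ideal `𝔪` of `k[[x,y,z]]`. Modulo `F` this gives `y^(m-2) = -G x`, so `x` alone
generates `(x, y^(m-2))`. For `0 < d < m - 2` the splitting `F = G x + y^(m-2-d) y^d` puts `F` in
`𝔪 I`, `I = (x, y^d)`, so `I / (𝔪 I + (F)) = I / 𝔪 I`. Reading off the coefficients of the
monomials `x` and `y^d` sends `a x + b y^d` to `(a(0), b(0))` and identifies `I / 𝔪 I` with `k²`.
If `I S` were generated by one element `g`, then `I ⊆ (g) + 𝔪 I` and the image of `I` in `k²`
would be the line through the image of `g`.
-/

open MvPowerSeries Finsupp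

namespace Ideal

variable {R : Type*} [CommRing R]

theorem mem_mul_span_pair {J : Ideal R} {x w s : R} :
    s ∈ J * span {x, w} ↔ ∃ a ∈ J, ∃ b ∈ J, a * x + b * w = s := by
  simp only [span_insert x {w}, mul_sup, Submodule.mem_sup, mem_mul_span_singleton]
  constructor
  · rintro ⟨_, ⟨a, ha, rfl⟩, _, ⟨b, hb, rfl⟩, rfl⟩
    exact ⟨a, ha, b, hb, rfl⟩
  · rintro ⟨a, ha, b, hb, rfl⟩
    exact ⟨_, ⟨a, ha, rfl⟩, _, ⟨b, hb, rfl⟩, rfl⟩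

theorem map_mk_span_pair_eq_span_singleton {F x w G : R} (hF : F = x * G + w) :
    (span {x, w}).map (Quotient.mk (span {F})) = span {Quotient.mk (span {F}) x} := by
  have hw : Quotient.mk (span {F}) w = -Quotient.mk (span {F}) G * Quotient.mk (span {F}) x := by
    rw [← map_neg, ← map_mul, Quotient.mk_eq_mk_iff_sub_mem, mem_span_singleton, hF]
    exact ⟨1, by ring⟩
  rw [map_span, Set.image_pair, hw, span_insert, sup_eq_left, span_le,
    Set.singleton_subset_iff]
  exact mul_mem_left _ _ (mem_span_singleton_self _)

theorem exists_le_span_singleton_sup_of_isPrincipal_map {I J K : Ideal R} (hJK : J ≤ K)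
    (hI : (I.map (Quotient.mk J)).IsPrincipal) : ∃ g ∈ I, I ≤ span {g} ⊔ K := by
  obtain ⟨g, hgI, hg⟩ := (mem_map_iff_of_surjective _ Quotient.mk_surjective).mp
    (hI.generator_mem)
  refine ⟨g, hgI, fun s hs => ?_⟩
  have hmk : Quotient.mk J s ∈ span {Quotient.mk J g} := by
    rw [hg, span_singleton_generator]
    exact mem_map_of_mem _ hs
  obtain ⟨c, hc⟩ := mem_span_singleton'.mp hmk
  obtain ⟨r, rfl⟩ := Quotient.mk_surjective c
  rw [← map_mul, eq_comm, Quotient.mk_eq_mk_iff_sub_mem] at hc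
  rw [← add_sub_cancel (r * g) s]
  exact Submodule.add_mem_sup (mul_mem_left _ _ (mem_span_singleton_self g)) (hJK hc)

end Ideal

namespace MvPowerSeries

variable {σ R : Type*} [CommRing R]

theorem ker_constantCoeff_eq_span_range_X [Finite σ] :
    RingHom.ker (constantCoeff (σ := σ) (R := R)) = Ideal.span (Set.range X) := by
  classical
  have := Fintype.ofFinite σ
  refine le_antisymm (fun f hf => ?_) (Ideal.span_le.mpr ?_)
  · choose v hv using fun (e : σ →₀ ℕ) (he : e ≠ 0) => Finsupp.ne_iff.mp he
    let part (i : σ) : MvPowerSeries σ R := fun e =>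
      if h : e = 0 then 0 else if v e h = i then coeff e f else 0
    have coeff_part (i : σ) (e : σ →₀ ℕ) :
        coeff e (part i) = if h : e = 0 then 0 else if v e h = i then coeff e f else 0 :=
      rfl
    have hsum : f = ∑ i, part i := by
      ext e
      rw [map_sum]
      by_cases he : e = 0
      · subst he
        simpa [coeff_part] using hf
      · simp [coeff_part, he]
    have hdvd (i : σ) : X i ∣ part i := by
      refine X_dvd_iff.mpr fun e hei => ?_
      by_cases he : e = 0
      · simp [coeff_part, he]
      · have : v e he ≠ i := fun h => hv e he (h ▸ hei)
        simp [coeff_part, he, this]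
    rw [hsum]
    refine Ideal.sum_mem _ fun i _ => ?_
    obtain ⟨c, hc⟩ := hdvd i
    rw [hc]
    exact Ideal.mul_mem_right c _ (Ideal.subset_span ⟨i, rfl⟩)
  · rintro _ ⟨i, rfl⟩
    simp

def coeffPair (e e' : σ →₀ ℕ) : MvPowerSeries σ R →ₗ[R] R × R := (coeff e).prod (coeff e')

variable {i j : σ} {d : ℕ}

theorem coeffPair_mul_X_add_mul_X_pow (hij : i ≠ j) (hd : d ≠ 0) (a b : MvPowerSeries σ R) :
    coeffPair (single i 1) (single j d) (a * X i + b * X j ^ d) =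
      (constantCoeff a, constantCoeff b) := by
  have hji : ¬ single j d ≤ single i 1 := by simp [single_le_iff, hij, hd]
  have hij' : ¬ single i 1 ≤ single j d := by simp [single_le_iff, hij]
  rw [X_pow_eq, X_def, map_add]
  simp only [coeffPair, LinearMap.prod_apply, Function.prod, coeff_mul_monomial, if_neg hji,
    if_neg hij', le_refl, if_true, tsub_self, mul_one, coeff_zero_eq_constantCoeff_apply,
    Prod.mk_add_mk, add_zero, zero_add]

variable {s : MvPowerSeries σ R}

theorem mem_ker_constantCoeff_mul_span_iff (hij : i ≠ j) (hd : d ≠ 0)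
    (hs : s ∈ Ideal.span {X i, X j ^ d}) :
    s ∈ RingHom.ker constantCoeff * Ideal.span {X i, X j ^ d} ↔
      coeffPair (single i 1) (single j d) s = 0 := by
  obtain ⟨a, b, rfl⟩ := Ideal.mem_span_pair.mp hs
  rw [Ideal.mem_mul_span_pair, coeffPair_mul_X_add_mul_X_pow hij hd, Prod.mk_eq_zero]
  constructor
  · rintro ⟨a', ha', b', hb', h⟩
    have h' := congrArg (coeffPair (single i 1) (single j d)) h
    simp only [coeffPair_mul_X_add_mul_X_pow hij hd, Prod.mk.injEq] at h'
    rw [← h'.1, ← h'.2]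
    exact ⟨ha', hb'⟩
  · rintro ⟨ha, hb⟩
    exact ⟨a, ha, b, hb, rfl⟩

theorem coeffPair_mul_of_mem_span (hij : i ≠ j) (hd : d ≠ 0)
    (hs : s ∈ Ideal.span {X i, X j ^ d}) (r : MvPowerSeries σ R) :
    coeffPair (single i 1) (single j d) (r * s) =
      constantCoeff r • coeffPair (single i 1) (single j d) s := by
  obtain ⟨a, b, rfl⟩ := Ideal.mem_span_pair.mp hs
  rw [mul_add, ← mul_assoc, ← mul_assoc, coeffPair_mul_X_add_mul_X_pow hij hd,
    coeffPair_mul_X_add_mul_X_pow hij hd, Prod.smul_mk, map_mul, map_mul, smul_eq_mul,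
    smul_eq_mul]

theorem exists_coeffPair_eq_smul_of_mem_span_sup (hij : i ≠ j) (hd : d ≠ 0)
    {g : MvPowerSeries σ R} (hg : g ∈ Ideal.span {X i, X j ^ d})
    (hs : s ∈ Ideal.span {g} ⊔ RingHom.ker constantCoeff * Ideal.span {X i, X j ^ d}) :
    ∃ c : R,
      coeffPair (single i 1) (single j d) s = c • coeffPair (single i 1) (single j d) g := by
  obtain ⟨y, hy, t, ht, rfl⟩ := Submodule.mem_sup.mp hs
  obtain ⟨r, rfl⟩ := Ideal.mem_span_singleton'.mp hy
  refine ⟨constantCoeff r, ?_⟩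
  rw [map_add, coeffPair_mul_of_mem_span hij hd hg,
    (mem_ker_constantCoeff_mul_span_iff hij hd (Ideal.mul_le_right ht)).mp ht, add_zero]

theorem not_isPrincipal_map_mk_span_pair [Nontrivial R] (hij : i ≠ j) (hd : d ≠ 0)
    {F : MvPowerSeries σ R} (hF : F ∈ RingHom.ker constantCoeff * Ideal.span {X i, X j ^ d}) :
    ¬ ((Ideal.span {X i, X j ^ d}).map (Ideal.Quotient.mk (Ideal.span {F}))).IsPrincipal := by
  intro hP
  obtain ⟨g, hg, hle⟩ := Ideal.exists_le_span_singleton_sup_of_isPrincipal_map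
    (Ideal.span_le.mpr (Set.singleton_subset_iff.mpr hF)) hP
  obtain ⟨c, hc⟩ := exists_coeffPair_eq_smul_of_mem_span_sup hij hd hg
    (hle (Ideal.subset_span (Set.mem_insert _ _)))
  obtain ⟨c', hc'⟩ := exists_coeffPair_eq_smul_of_mem_span_sup hij hd hg
    (hle (Ideal.subset_span (Set.mem_insert_of_mem _ rfl)))
  have hx := coeffPair_mul_X_add_mul_X_pow hij hd (1 : MvPowerSeries σ R) 0
  have hy := coeffPair_mul_X_add_mul_X_pow hij hd (0 : MvPowerSeries σ R) 1
  simp only [one_mul, zero_mul, add_zero, zero_add, map_one, map_zero] at hx hy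
  rw [hx, Prod.smul_def] at hc
  rw [hy, Prod.smul_def] at hc'
  simp only [Prod.mk.injEq, smul_eq_mul] at hc hc'
  have : c' = 0 := by
    calc c' = c' * (c * (coeffPair (single i 1) (single j d) g).1) := by rw [← hc.1, mul_one]
      _ = c * (c' * (coeffPair (single i 1) (single j d) g).1) := by ring
      _ = 0 := by rw [← hc'.1, mul_zero]
  rw [this, zero_mul, zero_mul] at hc'
  exact one_ne_zero hc'.2

theorem finrank_span_pair_quotient_ker_constantCoeff_mul {k : Type*} [Field k] (hij : i ≠ j)
    (hd : d ≠ 0) :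
    Module.finrank k (Ideal.span {(X i : MvPowerSeries σ k), X j ^ d} ⧸
      Submodule.comap (Ideal.span {(X i : MvPowerSeries σ k), X j ^ d}).subtype
        (RingHom.ker constantCoeff * Ideal.span {X i, X j ^ d})) = 2 := by
  set I := Ideal.span {(X i : MvPowerSeries σ k), X j ^ d}
  set N := Submodule.comap I.subtype (RingHom.ker constantCoeff * I)
  set φ := coeffPair (single i 1) (single j d) ∘ₗ I.subtype.restrictScalars k
  have hsurj : Function.Surjective φ := by
    rintro ⟨c₁, c₂⟩
    refine ⟨⟨C c₁ * X i + C c₂ * X j ^ d, Ideal.mem_span_pair.mpr ⟨_, _, rfl⟩⟩, ?_⟩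
    simp [φ, coeffPair_mul_X_add_mul_X_pow hij hd]
  have hker : LinearMap.ker φ = N.restrictScalars k := by
    ext ⟨s, hs⟩
    exact (mem_ker_constantCoeff_mul_span_iff hij hd hs).symm
  calc Module.finrank k (I ⧸ N)
      = Module.finrank k (I ⧸ N.restrictScalars k) :=
        (Submodule.Quotient.restrictScalarsEquiv k N).finrank_eq.symm
    _ = Module.finrank k (k × k) := by
        rw [← hker]; exact (φ.quotKerEquivOfSurjective hsurj).finrank_eq
    _ = 2 := by simp

end MvPowerSeries

theorem stmt18_general (k : Type) [Field k] (m q : ℕ) (hq : 0 < q)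
    (a b f : MvPowerSeries (Fin 3) k)
    (F : MvPowerSeries (Fin 3) k)
    (hF : F = a * X 0 ^ 2 + b * X 0 * X 1 ^ 2 + f * X 0 * X 1 -
      (X 2 ^ q * X 0 - X 1 ^ (m - 2))) :
    Ideal.map (Ideal.Quotient.mk (Ideal.span {F}))
        (Ideal.span {X 0, X 1 ^ (m - 2)}) =
      Ideal.span {Ideal.Quotient.mk (Ideal.span {F}) (X 0)} ∧
    ∀ d : ℕ, 0 < d → d < m - 2 →
      ¬ (Ideal.map (Ideal.Quotient.mk (Ideal.span {F}))
          (Ideal.span {X 0, X 1 ^ d})).IsPrincipal ∧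
      Module.finrank k
        ((Ideal.span {(X 0 : MvPowerSeries (Fin 3) k), X 1 ^ d}) ⧸
          Submodule.comap (Ideal.span {(X 0 : MvPowerSeries (Fin 3) k), X 1 ^ d}).subtype
            (Ideal.span {(X 0 : MvPowerSeries (Fin 3) k), X 1, X 2} *
                Ideal.span {(X 0 : MvPowerSeries (Fin 3) k), X 1 ^ d} +
              Ideal.span {F})) = 2 := by
  set G : MvPowerSeries (Fin 3) k := a * X 0 + b * X 1 ^ 2 + f * X 1 - X 2 ^ q
  have hFG : F = X 0 * G + X 1 ^ (m - 2) := by rw [hF]; ring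
  refine ⟨Ideal.map_mk_span_pair_eq_span_singleton hFG, fun d hd hdm => ?_⟩
  have hmax : Ideal.span {(X 0 : MvPowerSeries (Fin 3) k), X 1, X 2} =
      RingHom.ker constantCoeff := by
    rw [ker_constantCoeff_eq_span_range_X]
    congr 1
    ext
    simp [Fin.exists_fin_succ, eq_comm]
  have hFmem : F ∈ RingHom.ker constantCoeff * Ideal.span {X 0, X 1 ^ d} := by
    refine Ideal.mem_mul_span_pair.mpr ⟨G, ?_, X 1 ^ (m - 2 - d), ?_, ?_⟩
    · simp [G, zero_pow hq.ne']
    · simp [zero_pow (Nat.sub_ne_zero_of_lt hdm)]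
    · rw [hFG, mul_comm, ← pow_add, Nat.sub_add_cancel hdm.le]
  have hsup : RingHom.ker constantCoeff * Ideal.span {X 0, X 1 ^ d} + Ideal.span {F} =
      RingHom.ker constantCoeff * Ideal.span {X 0, X 1 ^ d} :=
    sup_eq_left.mpr (Ideal.span_le.mpr (Set.singleton_subset_iff.mpr hFmem))
  rw [hmax, hsup]
  exact ⟨not_isPrincipal_map_mk_span_pair (by decide) hd.ne' hFmem,
    finrank_span_pair_quotient_ker_constantCoeff_mul (by decide) hd.ne'⟩

set_option synthInstance.maxHeartbeats 1000000 in
/-- let `R = k[[x,y,z]]` and `F = a x² + b x y² + f x y - (z^q x - y^(m-2))`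
with `a, b` units, `m ≥ 4`, `f ∈ (z)`.  Then in `S = R/(F)` the ideal `(x, y^(m-2))S` is
principal, generated by the image of `x`, while for `0 < d < m - 2` the ideal `(x, y^d)S`
is not principal and `dim_k (x,y^d)/((x,y,z)(x,y^d) + (F)) = 2`. -/
theorem stmt18 (k : Type) [Field k] (m q : ℕ) (hm : 4 ≤ m) (hq : 0 < q)
    (a b f : MvPowerSeries (Fin 3) k) (ha : IsUnit a) (hb : IsUnit b)
    (hf : f ∈ Ideal.span {(X 2 : MvPowerSeries (Fin 3) k)})
    (F : MvPowerSeries (Fin 3) k)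
    (hF : F = a * X 0 ^ 2 + b * X 0 * X 1 ^ 2 + f * X 0 * X 1 -
      (X 2 ^ q * X 0 - X 1 ^ (m - 2))) :
    Ideal.map (Ideal.Quotient.mk (Ideal.span {F}))
        (Ideal.span {X 0, X 1 ^ (m - 2)}) =
      Ideal.span {Ideal.Quotient.mk (Ideal.span {F}) (X 0)} ∧
    ∀ d : ℕ, 0 < d → d < m - 2 →
      ¬ (Ideal.map (Ideal.Quotient.mk (Ideal.span {F}))
          (Ideal.span {X 0, X 1 ^ d})).IsPrincipal ∧
      Module.finrank k
        ((Ideal.span {(X 0 : MvPowerSeries (Fin 3) k), X 1 ^ d}) ⧸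
          Submodule.comap (Ideal.span {(X 0 : MvPowerSeries (Fin 3) k), X 1 ^ d}).subtype
            (Ideal.span {(X 0 : MvPowerSeries (Fin 3) k), X 1, X 2} *
                Ideal.span {(X 0 : MvPowerSeries (Fin 3) k), X 1 ^ d} +
              Ideal.span {F})) = 2 :=
  stmt18_general k m q hq a b f F hF
end
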